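/- arXiv:2006.09031 — 3 statements merged into one kernel-verified Lean document; each statement's English description precedes it below -/
import Mathlib

section
/- Let G be a finite group and let p be a prime. If V(ℤG) contains an element of order pⁿ for some positive integer n, then G contains an element of order pⁿ. -/
open MonoidAlgebra

noncomputable section

/-- The augmentation of an element of the integral group ring `ℤG`:
the sum of its coefficients. -/
def aug {G : Type*} [Group G] (u : MonoidAlgebra ℤ G) : ℤ :=
  u.coeff.sum fun _ z => z

namespace CL
open Finset
variable {G : Type*} [Group G] [Fintype G]

omit [Group G] in
lemma sum_single_univ {R : Type*} [Semiring R] (x : MonoidAlgebra R G) :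
    x = ∑ g : G, MonoidAlgebra.single g (x.coeff g) := by
  classical
  ext h
  rw [MonoidAlgebra.coeff_sum, Finset.sum_apply']
  simp [Finsupp.single_apply]

lemma pow_eq_sum {R : Type*} [CommRing R] (x : MonoidAlgebra R G) (m : ℕ) :
    x ^ m = ∑ w : Fin m → G, MonoidAlgebra.single ((List.ofFn w).prod) (∏ i, x.coeff (w i)) := by
  classical
  induction m with
  | zero =>
    rw [pow_zero, Fintype.sum_unique]
    simp [MonoidAlgebra.one_def]
  | succ m ih =>
    rw [pow_succ']
    conv_lhs => lhs; rw [sum_single_univ x]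
    rw [ih, Finset.sum_mul_sum]
    rw [← (Fin.consEquiv (fun _ : Fin (m+1) => G)).sum_comp]
    rw [Fintype.sum_prod_type]
    apply Finset.sum_congr rfl; intro g _
    apply Finset.sum_congr rfl; intro w _
    rw [MonoidAlgebra.single_mul_single]
    congr 1
    · simp [Fin.consEquiv, List.ofFn_succ]
    · rw [Fin.prod_univ_succ]
      simp [Fin.consEquiv]

/-- weighted coefficient sum -/
def T {R : Type*} [CommRing R] (φ : G → R) (x : MonoidAlgebra R G) : R :=
  ∑ g : G, x.coeff g * φ g

lemma T_apply_sum {R : Type*} [CommRing R] (φ : G → R) {ι : Type*} (s : Finset ι)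
    (f : ι → MonoidAlgebra R G) : T φ (∑ i ∈ s, f i) = ∑ i ∈ s, T φ (f i) := by
  unfold T
  rw [Finset.sum_comm']
  · apply Finset.sum_congr rfl; intro g _
    rw [MonoidAlgebra.coeff_sum, Finset.sum_apply', Finset.sum_mul]
  · intros; simp

omit [Group G] in
lemma T_single {R : Type*} [CommRing R] (φ : G → R) (t : G) (a : R) :
    T φ (MonoidAlgebra.single t a) = a * φ t := by
  classical
  unfold T
  rw [Finset.sum_eq_single t]
  · simp
  · intro b _ hb; simp [Finsupp.single_apply, Ne.symm hb]
  · simp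

lemma T_pow {R : Type*} [CommRing R] (φ : G → R) (x : MonoidAlgebra R G) (m : ℕ) :
    T φ (x ^ m) = ∑ w : Fin m → G, (∏ i, x.coeff (w i)) * φ ((List.ofFn w).prod) := by
  rw [pow_eq_sum, T_apply_sum]
  exact Finset.sum_congr rfl fun w _ => T_single _ _ _

/-- rotating a word changes the product by "cyclic" moves only -/
lemma rot_invariant {R : Type*} [CommRing R] (φ : G → R)
    (hφ : ∀ a b : G, φ (a * b) = φ (b * a)) {m : ℕ} (w : Fin (m+1) → G) :
    φ ((List.ofFn (fun i => w (i + 1))).prod) = φ ((List.ofFn w).prod) := by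
  have h1 : (List.ofFn (fun i : Fin (m+1) => w (i + 1)))
      = (List.ofFn (fun i : Fin m => w i.succ)).concat (w 0) := by
    rw [List.ofFn_succ' (fun i : Fin (m+1) => w (i + 1))]
    congr 1
    · apply congrArg
      funext i
      congr 1
      ext
      simp [Fin.add_def, Nat.mod_eq_of_lt (Nat.lt_of_lt_of_le i.isLt (Nat.le_succ m)),
        Nat.mod_eq_of_lt (Nat.succ_lt_succ i.isLt)]
    · congr 1
      ext
      simp [Fin.add_def, Fin.last]
  rw [h1, List.prod_concat, List.ofFn_succ, List.prod_cons, hφ]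

section Neck
variable {G : Type*} [Fintype G] (p : ℕ) [Fact p.Prime] {M : Type*} [AddCommMonoid M]

/-- cyclic shift -/
def shf (k : ZMod p) (w : ZMod p → G) : ZMod p → G := fun i => w (i + k)

lemma shf_shf (k l : ZMod p) (w : ZMod p → G) : shf p k (shf p l w) = shf p (k + l) w := by
  funext i; simp [shf, add_assoc, add_comm k l]

variable (F : (ZMod p → G) → M) (hF : ∀ w, F (shf p 1 w) = F w)

include hF in
lemma F_shf_nat : ∀ (m : ℕ) (w), F (shf p (m : ZMod p) w) = F w := by
  intro m
  induction m with
  | zero =>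
    intro w
    have h0 : shf p ((0:ℕ) : ZMod p) w = w := by funext i; simp [shf]
    rw [h0]
  | succ m ih =>
    intro w
    have : shf p ((m+1 : ℕ) : ZMod p) w = shf p 1 (shf p (m : ZMod p) w) := by
      rw [shf_shf]; push_cast; rw [add_comm]
    rw [this, hF, ih]

include hF in
lemma F_shf (k : ZMod p) (w) : F (shf p k w) = F w := by
  have := F_shf_nat p F hF k.val w
  rwa [ZMod.natCast_val, ZMod.cast_id] at this

lemma shf_const_eq (w : ZMod p → G) (k : ZMod p) (hk : k ≠ 0) (hw : shf p k w = w) :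
    ∃ g, w = fun _ => g := by
  haveI : Fact p.Prime := inferInstance
  have step : ∀ (m : ℕ) (i : ZMod p), w (i + (m : ZMod p) * k) = w i := by
    intro m
    induction m with
    | zero => simp
    | succ m ih =>
      intro i
      have h1 : i + ((m+1 : ℕ) : ZMod p) * k = (i + k) + (m : ZMod p) * k := by push_cast; ring
      rw [h1, ih (i + k)]
      exact congrFun hw i
  refine ⟨w 0, funext fun i => ?_⟩
  have h2 : (0 : ZMod p) + ((i * k⁻¹).val : ZMod p) * k = i := by
    rw [ZMod.natCast_val, ZMod.cast_id, zero_add, mul_assoc, inv_mul_cancel₀ hk, mul_one]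
  calc w i = w (0 + ((i * k⁻¹).val : ZMod p) * k) := by rw [h2]
    _ = w 0 := step _ _

include hF in
lemma neck (hM : ∀ m : M, p • m = 0) :
    ∑ w : ZMod p → G, F w = ∑ g : G, F (fun _ => g) := by
  classical
  cases isEmpty_or_nonempty G with
  | inl h => simp [Finset.univ_eq_empty]
  | inr h => ?_
  -- orbit finsets
  set Orb : (ZMod p → G) → Finset (ZMod p → G) :=
    fun w => univ.filter (fun y => ∃ k : ZMod p, shf p k w = y) with hOrb
  have self_mem : ∀ w, w ∈ Orb w := by
    intro w; simp only [hOrb, mem_filter, mem_univ, true_and]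
    exact ⟨0, by funext i; simp [shf]⟩
  have orb_eq : ∀ w y, y ∈ Orb w → Orb y = Orb w := by
    intro w y hy
    simp only [hOrb, mem_filter, mem_univ, true_and] at hy
    obtain ⟨k, hk⟩ := hy
    ext z
    simp only [hOrb, mem_filter, mem_univ, true_and]
    constructor
    · rintro ⟨k', rfl⟩; exact ⟨k' + k, by rw [← shf_shf, hk]⟩
    · rintro ⟨k', rfl⟩
      refine ⟨k' - k, ?_⟩
      rw [← hk, shf_shf, sub_add_cancel]
  have filter_eq : ∀ w, univ.filter (fun y => Orb y = Orb w) = Orb w := by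
    intro w
    ext y
    simp only [mem_filter, mem_univ, true_and]
    constructor
    · intro h'; rw [← h']; exact self_mem y
    · intro h'; exact orb_eq w y h'
  have maps : ∀ w ∈ (univ : Finset (ZMod p → G)), Orb w ∈ univ.image Orb :=
    fun w _ => mem_image_of_mem _ (mem_univ w)
  rw [← Finset.sum_fiberwise_of_maps_to maps F]
  -- constants subset
  set Cs : Finset (Finset (ZMod p → G)) := univ.image (fun g : G => Orb (fun _ => g)) with hCs
  have hCsub : Cs ⊆ univ.image Orb := by
    intro s hs
    simp only [hCs, mem_image] at hs
    obtain ⟨g, _, rfl⟩ := hs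
    exact mem_image_of_mem _ (mem_univ _)
  have shf_const : ∀ (k : ZMod p) (g : G), shf p k (fun _ => g) = (fun _ => g) := by
    intro k g; funext i; rfl
  have orb_const : ∀ g : G, Orb (fun _ => g) = {fun _ => g} := by
    intro g
    ext y
    simp only [hOrb, mem_filter, mem_univ, true_and, mem_singleton]
    constructor
    · rintro ⟨k, rfl⟩; rw [shf_const]
    · rintro rfl; exact ⟨0, by rw [shf_const]⟩
  rw [← Finset.sum_subset hCsub]
  · -- sum over constants
    rw [hCs, Finset.sum_image]
    · apply Finset.sum_congr rfl
      intro g _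
      rw [filter_eq, orb_const, Finset.sum_singleton]
    · intro g _ g' _ hgg'
      have h1 : (fun _ => g : ZMod p → G) ∈ Orb (fun _ => g') := by rw [show Orb (fun _ => g') = Orb (fun _ => g) from hgg'.symm]; exact self_mem _
      rw [orb_const, mem_singleton] at h1
      exact congrFun h1 0
  · -- non-constant orbits sum to zero
    intro s hs hns
    simp only [mem_image, mem_univ, true_and] at hs
    obtain ⟨w, rfl⟩ := hs
    have hwnc : ¬ ∃ g, w = fun _ => g := by
      rintro ⟨g, rfl⟩
      exact hns (by rw [hCs]; exact mem_image_of_mem _ (mem_univ g))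
    rw [filter_eq]
    have horb_im : Orb w = univ.image (fun k : ZMod p => shf p k w) := by
      ext y
      simp [hOrb]
    rw [horb_im, Finset.sum_image]
    · have : ∀ k : ZMod p, F (shf p k w) = F w := fun k => F_shf p F hF k w
      rw [Finset.sum_congr rfl (fun k _ => this k), Finset.sum_const, Finset.card_univ, ZMod.card]
      exact hM _
    · intro k _ k' _ hkk'
      by_contra hne
      have hdiff : shf p (k - k') w = w := by
        have := congrArg (shf p (-k')) hkk'
        rw [shf_shf, shf_shf] at this
        have h0 : -k' + k' = 0 := by ring
        rw [h0] at this
        have : shf p (-k' + k) w = w := by rw [this]; funext i; simp [shf]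
        rwa [add_comm, ← sub_eq_add_neg] at this
      exact hwnc (shf_const_eq p w _ (sub_ne_zero.mpr hne) hdiff)
end Neck

theorem key (p : ℕ) [hp : Fact p.Prime] (φ : G → ZMod p)
    (hφ : ∀ a b : G, φ (a * b) = φ (b * a)) (x : MonoidAlgebra (ZMod p) G) :
    T φ (x ^ p) = ∑ g : G, x.coeff g * φ (g ^ p) := by
  classical
  obtain ⟨m, hm⟩ := Nat.exists_eq_succ_of_ne_zero hp.out.ne_zero
  subst hm
  haveI : NeZero (m + 1) := ⟨Nat.succ_ne_zero m⟩
  set q := m + 1 with hq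
  have hval : ∀ a : ZMod q, a.val < q := fun a => ZMod.val_lt a
  set e : Fin q ≃ ZMod q :=
    { toFun := fun i => (i.val : ZMod q)
      invFun := fun a => ⟨a.val, hval a⟩
      left_inv := by
        intro i; ext
        simp [ZMod.val_natCast_of_lt i.isLt]
      right_inv := by
        intro a
        simp [ZMod.natCast_val, ZMod.cast_id] } with he
  have e_add_one : ∀ i : Fin q, e (i + 1) = e i + 1 := by
    intro i
    show (((i + 1 : Fin q)).val : ZMod q) = (i.val : ZMod q) + 1
    rw [Fin.add_def, ZMod.natCast_mod]
    push_cast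
    rw [Fin.val_one', ZMod.natCast_mod, Nat.cast_one]
  have Hrot : ∀ w : Fin q → G,
      (∏ i, x.coeff (w (i + 1))) * φ ((List.ofFn (fun i => w (i + 1))).prod)
        = (∏ i, x.coeff (w i)) * φ ((List.ofFn w).prod) := by
    intro w
    have hprod : (∏ i, x.coeff (w (i + 1))) = ∏ i, x.coeff (w i) := by
      apply Fintype.prod_equiv (Equiv.addRight (1 : Fin q))
      intro i; rfl
    exact congrArg₂ (· * ·) hprod (rot_invariant φ hφ (m := m) w)
  rw [T_pow]
  have step1 : ∑ w : Fin q → G, (∏ i, x.coeff (w i)) * φ ((List.ofFn w).prod)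
      = ∑ v : ZMod q → G, (∏ i, x.coeff ((v ∘ e) i)) * φ ((List.ofFn (v ∘ e)).prod) := by
    apply Fintype.sum_equiv (Equiv.arrowCongr e (Equiv.refl G))
    intro w
    have : (Equiv.arrowCongr e (Equiv.refl G) w) ∘ e = w := by
      funext i; simp [Equiv.arrowCongr]
    rw [this]
  rw [step1]
  have hFinv : ∀ v : ZMod q → G,
      (∏ i, x.coeff (((shf q 1 v) ∘ e) i)) * φ ((List.ofFn ((shf q 1 v) ∘ e)).prod)
        = (∏ i, x.coeff ((v ∘ e) i)) * φ ((List.ofFn (v ∘ e)).prod) := by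
    intro v
    have hc : (shf q 1 v) ∘ e = fun i => (v ∘ e) (i + 1) := by
      funext i
      show v (e i + 1) = v (e (i + 1))
      rw [e_add_one]
    rw [hc]
    exact Hrot (v ∘ e)
  have step2 := neck q (fun v => (∏ i, x.coeff ((v ∘ e) i)) * φ ((List.ofFn (v ∘ e)).prod))
    hFinv (fun z => by
      have h0 : ((q : ℕ) : ZMod q) = 0 := ZMod.natCast_self q
      rw [nsmul_eq_mul, h0, zero_mul])
  rw [step2]
  apply Finset.sum_congr rfl
  intro g _
  beta_reduce
  have hconst : ((fun _ : ZMod q => g) ∘ e) = fun _ : Fin q => g := rfl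
  rw [hconst]
  simp only [Finset.prod_const, Finset.card_univ, Fintype.card_fin]
  have hofn : (List.ofFn (fun _ : Fin q => g)).prod = g ^ q := by
    rw [List.ofFn_const, List.prod_replicate]
  rw [hofn, ZMod.pow_card]

omit [Fintype G] in
lemma conj_mul_pow (a b : G) (m : ℕ) : b * (a * b) ^ m * a = (b * a) ^ (m+1) := by
  induction m with
  | zero => simp
  | succ m ih =>
    rw [pow_succ (a * b) m, pow_succ (b * a) (m+1), ← ih]
    group

theorem T_pow_prime_pow (p : ℕ) [hp : Fact p.Prime] (k : ℕ) (φ : G → ZMod p)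
    (hφ : ∀ a b : G, φ (a * b) = φ (b * a)) (x : MonoidAlgebra (ZMod p) G) :
    T φ (x ^ p ^ k) = ∑ g : G, x.coeff g * φ (g ^ p ^ k) := by
  induction k generalizing φ x with
  | zero => simp [T]
  | succ k ih =>
    have h1 : x ^ p ^ (k+1) = (x ^ p) ^ p ^ k := by
      rw [← pow_mul, pow_succ']
    rw [h1, ih _ hφ]
    have h2 := key p (fun g => φ (g ^ p ^ k)) ?_ x
    · rw [show (∑ g : G, (x ^ p).coeff g * φ (g ^ p ^ k)) = T (fun g => φ (g ^ p ^ k)) (x ^ p) from rfl, h2]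
      apply Finset.sum_congr rfl
      intro g _
      rw [← pow_mul, ← pow_succ']
    · intro a b
      show φ ((a * b) ^ p ^ k) = φ ((b * a) ^ p ^ k)
      rcases Nat.eq_zero_or_pos (p ^ k) with h | h
      · rw [h]; simp
      · obtain ⟨m, hm⟩ := Nat.exists_eq_succ_of_ne_zero h.ne'
        rw [hm, ← conj_mul_pow a b m, hφ, ← mul_assoc, ← pow_succ']
  
-- mod-p / complex reduction ring hom
def redH {R : Type*} [CommRing R] : MonoidAlgebra ℤ G →+* MonoidAlgebra R G :=
  MonoidAlgebra.liftNCRingHom (MonoidAlgebra.singleOneRingHom.comp (Int.castRingHom R))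
    (MonoidAlgebra.of R G) (by
      intro z g
      show Commute (MonoidAlgebra.single (1:G) ((z : ℤ) : R)) (MonoidAlgebra.single g (1:R))
      unfold Commute SemiconjBy
      rw [MonoidAlgebra.single_mul_single, MonoidAlgebra.single_mul_single]
      rw [one_mul, mul_one, one_mul, mul_one])

omit [Fintype G] in
lemma redH_single {R : Type*} [CommRing R] (g : G) (a : ℤ) :
    (redH (MonoidAlgebra.single g a) : MonoidAlgebra R G) = MonoidAlgebra.single g (a : R) := by
  unfold redH
  unfold MonoidAlgebra.liftNCRingHom
  show MonoidAlgebra.liftNC _ _ (MonoidAlgebra.single g a) = _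
  rw [MonoidAlgebra.liftNC_single]
  show MonoidAlgebra.single (1:G) ((a : ℤ) : R) * MonoidAlgebra.single g (1:R) = _
  rw [MonoidAlgebra.single_mul_single, mul_one, one_mul]

omit [Fintype G] in
lemma redH_apply {R : Type*} [CommRing R] (x : MonoidAlgebra ℤ G) (g : G) :
    (redH x : MonoidAlgebra R G).coeff g = ((x.coeff g : ℤ) : R) := by
  classical
  induction x using MonoidAlgebra.induction_linear with
  | zero => simp
  | add f₁ f₂ h1 h2 =>
    rw [map_add]
    show (redH f₁ + redH f₂ : MonoidAlgebra R G).coeff g = _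
    rw [MonoidAlgebra.coeff_add, Finsupp.add_apply, h1, h2]
    show _ = (((f₁ + f₂).coeff g : ℤ) : R)
    rw [MonoidAlgebra.coeff_add, Finsupp.add_apply]
    push_cast
    ring
  | single a b =>
    rw [redH_single]
    rw [MonoidAlgebra.coeff_single, MonoidAlgebra.coeff_single, Finsupp.single_apply, Finsupp.single_apply]
    split <;> simp

theorem coeff_one_mod_p (p : ℕ) [hp : Fact p.Prime] (n : ℕ) (hn : 0 < n)
    (u : (MonoidAlgebra ℤ G)ˣ) (hord : orderOf u = p ^ n)
    (hno : ¬∃ g : G, orderOf g = p ^ n) :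
    (((↑(u ^ p ^ (n-1)) : MonoidAlgebra ℤ G).coeff 1 : ℤ) : ZMod p) = 1 := by
  classical
  set φe : G → ZMod p := fun g => if g = 1 then 1 else 0 with hφe
  have hφ : ∀ a b : G, φe (a * b) = φe (b * a) := by
    intro a b
    simp only [hφe]
    congr 1
    apply propext
    constructor
    · intro h
      rw [eq_inv_of_mul_eq_one_right h, inv_mul_cancel]
    · intro h
      rw [eq_inv_of_mul_eq_one_right h, inv_mul_cancel]
  have T_at_one : ∀ y : MonoidAlgebra (ZMod p) G, T φe y = y.coeff 1 := by
    intro y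
    unfold T
    simp only [hφe, mul_ite, mul_one, mul_zero]
    rw [Finset.sum_ite_eq' univ (1 : G) (fun g => y.coeff g)]
    simp
  set x : MonoidAlgebra (ZMod p) G := redH ↑u with hx
  have hx1 : x ^ p ^ n = 1 := by
    rw [hx, ← map_pow, ← Units.val_pow_eq_pow_val, ← hord, pow_orderOf_eq_one, Units.val_one,
      map_one]
  have hiff : ∀ g : G, (g ^ p ^ (n-1) = 1) ↔ (g ^ p ^ n = 1) := by
    intro g
    constructor
    · intro h
      have : g ^ p ^ n = (g ^ p ^ (n-1)) ^ p := by
        rw [← pow_mul, ← pow_succ]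
        congr 1
        congr 1
        omega
      rw [this, h, one_pow]
    · intro h
      have hdvd := orderOf_dvd_of_pow_eq_one h
      obtain ⟨a, ha_le, ha⟩ := (Nat.dvd_prime_pow hp.out).mp hdvd
      have ha_ne : a ≠ n := by
        intro hEq
        exact hno ⟨g, by rw [ha, hEq]⟩
      have : orderOf g ∣ p ^ (n-1) := by
        rw [ha]
        exact pow_dvd_pow p (by omega)
      exact orderOf_dvd_iff_pow_eq_one.mp this
  -- main chain
  have e1 : (∑ g : G, x.coeff g * φe (g ^ p ^ n)) = 1 := by
    rw [← T_pow_prime_pow p n φe hφ x, hx1, T_at_one]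
    rw [MonoidAlgebra.one_def, MonoidAlgebra.coeff_single, Finsupp.single_eq_same]
  have e2 : (∑ g : G, x.coeff g * φe (g ^ p ^ (n-1))) = 1 := by
    rw [← e1]
    apply Finset.sum_congr rfl
    intro g _
    congr 1
    simp only [hφe]
    rw [if_congr (hiff g) rfl rfl]
  calc (((↑(u ^ p ^ (n-1)) : MonoidAlgebra ℤ G).coeff 1 : ℤ) : ZMod p)
      = (redH (↑(u ^ p ^ (n-1)) : MonoidAlgebra ℤ G) : MonoidAlgebra (ZMod p) G).coeff 1 := by
        rw [redH_apply]
    _ = (x ^ p ^ (n-1)).coeff 1 := by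
        rw [hx, Units.val_pow_eq_pow_val, map_pow]
    _ = T φe (x ^ p ^ (n-1)) := (T_at_one _).symm
    _ = ∑ g : G, x.coeff g * φe (g ^ p ^ (n-1)) := T_pow_prime_pow p (n-1) φe hφ x
    _ = 1 := e2

section MatrixRep
variable [DecidableEq G]

def mat (y : MonoidAlgebra ℂ G) : Matrix G G ℂ :=
  Matrix.of fun i j => y.coeff (i * j⁻¹)

lemma mat_one : mat (1 : MonoidAlgebra ℂ G) = 1 := by
  ext i j
  show (1 : MonoidAlgebra ℂ G).coeff (i * j⁻¹) = (1 : Matrix G G ℂ) i j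
  rw [MonoidAlgebra.one_def, MonoidAlgebra.coeff_single, Finsupp.single_apply, Matrix.one_apply]
  congr 1
  simp [eq_comm, mul_inv_eq_one]

lemma mul_apply_univ (y z : MonoidAlgebra ℂ G) (t : G) :
    (y * z).coeff t = ∑ g : G, y.coeff g * z.coeff (g⁻¹ * t) := by
  conv_lhs => rw [sum_single_univ y]
  rw [Finset.sum_mul]
  rw [MonoidAlgebra.coeff_sum, Finset.sum_apply']
  apply Finset.sum_congr rfl
  intro g _
  have : MonoidAlgebra.single g (y.coeff g) * z = ∑ h : G, MonoidAlgebra.single (g * h) (y.coeff g * z.coeff h) := by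
    conv_lhs => rhs; rw [sum_single_univ z]
    rw [Finset.mul_sum]
    apply Finset.sum_congr rfl
    intro h _
    rw [MonoidAlgebra.single_mul_single]
  rw [this, MonoidAlgebra.coeff_sum, Finset.sum_apply']
  rw [Finset.sum_eq_single (g⁻¹ * t)]
  · rw [MonoidAlgebra.coeff_single, Finsupp.single_apply, if_pos (by group)]
  · intro h _ hne
    rw [MonoidAlgebra.coeff_single, Finsupp.single_apply, if_neg]
    intro hEq
    exact hne (by rw [← hEq]; group)
  · intro h; exact absurd (Finset.mem_univ _) h

lemma mat_mul (y z : MonoidAlgebra ℂ G) : mat (y * z) = mat y * mat z := by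
  ext i j
  show (y * z).coeff (i * j⁻¹) = ∑ k : G, y.coeff (i * k⁻¹) * z.coeff (k * j⁻¹)
  rw [mul_apply_univ]
  apply Fintype.sum_bijective (fun g : G => g⁻¹ * i)
    (((Equiv.inv G).trans (Equiv.mulRight i)).bijective)
  intro g
  show y.coeff g * z.coeff (g⁻¹ * (i * j⁻¹)) = y.coeff (i * (g⁻¹ * i)⁻¹) * z.coeff ((g⁻¹ * i) * j⁻¹)
  congr 2
  · group
  · group

lemma mat_pow (y : MonoidAlgebra ℂ G) (k : ℕ) : mat (y ^ k) = (mat y) ^ k := by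
  induction k with
  | zero => rw [pow_zero, pow_zero, mat_one]
  | succ k ih => rw [pow_succ, pow_succ, mat_mul, ih]

lemma mat_trace (y : MonoidAlgebra ℂ G) :
    (mat y).trace = (Fintype.card G : ℂ) * y.coeff 1 := by
  unfold Matrix.trace
  have : ∀ i : G, (mat y).diag i = y.coeff 1 := by
    intro i
    show y.coeff (i * i⁻¹) = y.coeff 1
    rw [mul_inv_cancel]
  rw [Finset.sum_congr rfl (fun i _ => this i), Finset.sum_const, Finset.card_univ,
    nsmul_eq_mul]
end MatrixRep

-- nilpotent + unipotent torsion
lemma nilp {Λ : Type*} [Ring Λ] [Algebra ℂ Λ] (M : Λ) (N m : ℕ) (hMN : M ^ N = 0)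
    (hm : m ≠ 0) (h : (1 + M) ^ m = 1) : M = 0 := by
  obtain ⟨m', hm'⟩ := Nat.exists_eq_succ_of_ne_zero hm
  subst hm'
  rw [add_comm, Commute.add_pow (Commute.one_right M)] at h
  simp only [one_pow, mul_one] at h
  rw [Finset.sum_range_succ', Finset.sum_range_succ'] at h
  simp only [zero_add, pow_zero, Nat.choose_zero_right, Nat.cast_one, mul_one, one_mul, pow_one,
    Nat.choose_one_right] at h
  have hsum : ∑ k ∈ Finset.range m', M ^ (k + 1 + 1) * ((m' + 1).choose (k + 1 + 1) : Λ)
      = M ^ 2 * ∑ i ∈ Finset.range m', M ^ i * ((m' + 1).choose (i + 2) : Λ) := by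
    rw [Finset.mul_sum]
    apply Finset.sum_congr rfl
    intro i _
    rw [← mul_assoc, ← pow_add]
    congr 2
    omega
  rw [hsum] at h
  rw [add_eq_right] at h
  have h2 : M * ((m' + 1 : ℕ) : Λ) = -(M ^ 2 * ∑ i ∈ Finset.range m',
      M ^ i * ((m' + 1).choose (i + 2) : Λ)) :=
    eq_neg_of_add_eq_zero_right h
  set E := ∑ i ∈ Finset.range m', M ^ i * ((m' + 1).choose (i + 2) : Λ) with hE
  set cm := algebraMap ℂ Λ (((m' + 1 : ℕ) : ℂ)⁻¹) with hcm
  have hmc : ((m' + 1 : ℕ) : Λ) * cm = 1 := by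
    rw [hcm, ← map_natCast (algebraMap ℂ Λ) (m' + 1), ← map_mul,
      mul_inv_cancel₀ (Nat.cast_ne_zero.mpr (Nat.succ_ne_zero m')), map_one]
  have hMD : M = M ^ 2 * (-(E * cm)) := by
    calc M = M * (((m' + 1 : ℕ) : Λ) * cm) := by rw [hmc, mul_one]
    _ = (M * ((m' + 1 : ℕ) : Λ)) * cm := by rw [mul_assoc]
    _ = (-(M ^ 2 * E)) * cm := by rw [h2]
    _ = M ^ 2 * (-(E * cm)) := by rw [neg_mul, mul_assoc, ← mul_neg]
  set D := -(E * cm) with hD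
  have hiter : ∀ j : ℕ, M = M ^ (j + 1) * D ^ j := by
    intro j
    induction j with
    | zero => simp
    | succ j ih =>
      have hstep : M ^ (j + 1) = M ^ (j + 2) * D := by
        calc M ^ (j+1) = M ^ j * M := by rw [pow_succ]
        _ = M ^ j * (M ^ 2 * D) := by rw [← hMD]
        _ = M ^ (j + 2) * D := by rw [← mul_assoc, ← pow_add]
      calc M = M ^ (j + 1) * D ^ j := ih
      _ = (M ^ (j + 2) * D) * D ^ j := by rw [hstep]
      _ = M ^ (j + 1 + 1) * D ^ (j + 1) := by
          rw [mul_assoc, ← pow_succ']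
  have := hiter N
  rw [pow_succ, hMN, zero_mul, zero_mul] at this
  exact this

-- all roots equal one
lemma re_msum (s : Multiset ℂ) : (s.map Complex.re).sum = s.sum.re := by
  induction s using Multiset.induction_on with
  | empty => simp
  | cons a t ih => simp [ih]

lemma allone (s : Multiset ℂ) (h1 : ∀ z ∈ s, ‖z‖ = 1)
    (h2 : (s.map Complex.re).sum = (Multiset.card s : ℝ)) : ∀ z ∈ s, z = 1 := by
  have hre_le : ∀ z ∈ s, z.re ≤ 1 := by
    intro z hz
    calc z.re ≤ ‖z‖ := Complex.re_le_norm z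
    _ = 1 := h1 z hz
  have hre : ∀ z ∈ s, z.re = 1 := by
    by_contra hcon
    push_neg at hcon
    obtain ⟨z0, hz0, hne⟩ := hcon
    have hlt : z0.re < 1 := lt_of_le_of_ne (hre_le z0 hz0) hne
    obtain ⟨t, rfl⟩ := Multiset.exists_cons_of_mem hz0
    rw [Multiset.map_cons, Multiset.sum_cons, Multiset.card_cons] at h2
    have hbound : (t.map Complex.re).sum ≤ (Multiset.card (t.map Complex.re)) • (1:ℝ) := by
      apply Multiset.sum_le_card_nsmul
      intro x hx
      obtain ⟨z, hz, rfl⟩ := Multiset.mem_map.mp hx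
      exact hre_le z (Multiset.mem_cons_of_mem hz)
    rw [Multiset.card_map, nsmul_eq_mul, mul_one] at hbound
    have : ((Multiset.card t + 1 : ℕ) : ℝ) < 1 + Multiset.card t := by
      rw [← h2]
      have := add_lt_add_of_lt_of_le hlt hbound
      linarith
    push_cast at this
    linarith
  intro z hz
  have habs := h1 z hz
  have hrez := hre z hz
  have hsq : ‖z‖ ^ 2 = z.re ^ 2 + z.im ^ 2 := by
    rw [Complex.sq_norm, Complex.normSq_apply]; ring
  rw [habs, hrez] at hsq
  have him : z.im = 0 := by nlinarith [sq_nonneg z.im]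
  apply Complex.ext
  · exact hrez
  · simpa using him

theorem rigid (p : ℕ) (hp : p.Prime) (v : MonoidAlgebra ℤ G) (hv : v ^ p = 1)
    (hb : ((v.coeff 1 : ℤ) : ZMod p) = 1) :
    v = 1 ∨ (v = -(1 : MonoidAlgebra ℤ G) ∧ p = 2) := by
  classical
  haveI : Fact p.Prime := ⟨hp⟩
  set N := Fintype.card G with hN
  have hNpos : 0 < N := Fintype.card_pos
  set vC : MonoidAlgebra ℂ G := redH v with hvC
  set A : Matrix G G ℂ := mat vC with hA
  have hApow : A ^ p = 1 := by
    rw [hA, ← mat_pow, hvC, ← map_pow, hv, map_one, mat_one]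
  have htr : A.trace = (N : ℂ) * ((v.coeff 1 : ℤ) : ℂ) := by
    rw [hA, mat_trace, hvC, redH_apply]
  set rts := A.charpoly.roots with hrts
  have htr2 : A.trace = rts.sum := A.trace_eq_sum_roots_charpoly
  have hcard : Multiset.card rts = N := by
    rw [hrts, hN, ← Matrix.charpoly_natDegree_eq_dim A]
    exact Polynomial.splits_iff_card_roots.mp (IsAlgClosed.splits A.charpoly)
  -- each root is a p-th root of unity
  have hroot_pow : ∀ r ∈ rts, r ^ p = 1 := by
    intro r hr
    have hIsRoot : A.charpoly.IsRoot r := Polynomial.isRoot_of_mem_roots hr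
    have hdet : (r • (1 : Matrix G G ℂ) - A).det = 0 := by
      have h1 : (Matrix.charmatrix A).map (Polynomial.evalRingHom r)
          = r • (1 : Matrix G G ℂ) - A := by
        ext i j
        by_cases hij : i = j
        · subst hij
          rw [Matrix.map_apply, Matrix.charmatrix_apply_eq]
          simp [Matrix.one_apply]
        · rw [Matrix.map_apply, Matrix.charmatrix_apply_ne _ _ _ hij]
          simp [Matrix.one_apply, hij]
      have h2 := (Polynomial.evalRingHom r).map_det (Matrix.charmatrix A)
      rw [RingHom.mapMatrix_apply, h1] at h2
      rw [← h2]
      exact hIsRoot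
    obtain ⟨x, hx0, hx⟩ := (Matrix.exists_mulVec_eq_zero_iff).mpr hdet
    have hAx : A.mulVec x = r • x := by
      rw [Matrix.sub_mulVec, Matrix.smul_mulVec, Matrix.one_mulVec] at hx
      have := sub_eq_zero.mp hx
      exact this.symm
    have hk : ∀ k : ℕ, (A ^ k).mulVec x = r ^ k • x := by
      intro k
      induction k with
      | zero => simp [Matrix.one_mulVec]
      | succ k ih =>
        rw [pow_succ', ← Matrix.mulVec_mulVec, ih, Matrix.mulVec_smul, hAx, smul_smul,
          ← pow_succ]
    have := hk p
    rw [hApow, Matrix.one_mulVec] at this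
    obtain ⟨i, hi⟩ := Function.ne_iff.mp hx0
    have := congrFun this i
    have heq : (r ^ p - 1) * x i = 0 := by
      simp only [Pi.smul_apply, smul_eq_mul] at this
      rw [sub_mul, one_mul, ← this, sub_self]
    rcases mul_eq_zero.mp heq with h | h
    · exact sub_eq_zero.mp h
    · exact absurd h hi
  have habs : ∀ r ∈ rts, ‖r‖ = 1 := by
    intro r hr
    have h1 : ‖r‖ ^ p = 1 := by
      rw [← norm_pow, hroot_pow r hr, norm_one]
    rcases lt_trichotomy (‖r‖) 1 with h | h | h
    · exfalso
      have := pow_lt_one₀ (norm_nonneg r) h hp.ne_zero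
      rw [h1] at this; exact lt_irrefl _ this
    · exact h
    · exfalso
      have := one_lt_pow₀ h hp.ne_zero
      rw [h1] at this; exact lt_irrefl _ this
  have hsum_re : (rts.map Complex.re).sum = (N : ℝ) * ((v.coeff 1 : ℤ) : ℝ) := by
    rw [re_msum, ← htr2, htr]
    simp
  -- bounds on v 1
  have hub : (v.coeff 1 : ℤ) ≤ 1 := by
    have h1 : (rts.map Complex.re).sum ≤ (Multiset.card (rts.map Complex.re)) • (1:ℝ) := by
      apply Multiset.sum_le_card_nsmul
      intro x hx
      obtain ⟨z, hz, rfl⟩ := Multiset.mem_map.mp hx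
      calc z.re ≤ ‖z‖ := Complex.re_le_norm z
      _ = 1 := habs z hz
    rw [Multiset.card_map, hcard, nsmul_eq_mul, mul_one, hsum_re] at h1
    have : ((v.coeff 1 : ℤ) : ℝ) ≤ 1 := by
      by_contra hcon
      push_neg at hcon
      have := mul_lt_mul_of_pos_left hcon (by exact_mod_cast hNpos : (0:ℝ) < N)
      rw [mul_one] at this
      linarith
    exact_mod_cast this
  have hlb : -1 ≤ (v.coeff 1 : ℤ) := by
    have h1 : (Multiset.card (rts.map Complex.re)) • (-1:ℝ) ≤ (rts.map Complex.re).sum := by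
      apply Multiset.card_nsmul_le_sum
      intro x hx
      obtain ⟨z, hz, rfl⟩ := Multiset.mem_map.mp hx
      have h2 := abs_le.mp ((Complex.abs_re_le_norm z).trans (le_of_eq (habs z hz)))
      exact h2.1
    rw [Multiset.card_map, hcard, nsmul_eq_mul, mul_neg_one, hsum_re] at h1
    have : (-1 : ℝ) ≤ ((v.coeff 1 : ℤ) : ℝ) := by
      by_contra hcon
      push_neg at hcon
      have := mul_lt_mul_of_pos_left hcon (by exact_mod_cast hNpos : (0:ℝ) < N)
      rw [mul_neg_one] at this
      linarith
    exact_mod_cast this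
  -- v 1 is 1 or -1 (the latter only when p = 2)
  have hb3 : (v.coeff 1 : ℤ) = 1 ∨ ((v.coeff 1 : ℤ) = -1 ∧ p = 2) := by
    interval_cases h : (v.coeff 1 : ℤ)
    · right
      refine ⟨rfl, ?_⟩
      have h2 : ((2 : ℤ) : ZMod p) = 0 := by
        have h3 : ((-1 : ℤ) : ZMod p) = 1 := hb
        push_cast at h3 ⊢
        linear_combination -h3
      have hdvd : (p : ℤ) ∣ 2 := (ZMod.intCast_zmod_eq_zero_iff_dvd 2 p).mp h2
      have hdvd' : p ∣ 2 := by exact_mod_cast hdvd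
      rcases (Nat.Prime.eq_one_or_self_of_dvd Nat.prime_two p hdvd') with hh | hh
      · exact absurd hh hp.ne_one
      · exact hh
    · exfalso
      rw [Int.cast_zero] at hb
      exact zero_ne_one hb
    · left; rfl
  -- from all roots = γ, conclude (A - γ•1)^N = 0
  have hCHγ : ∀ γ : ℂ, (∀ r ∈ rts, r = γ) → (A - γ • 1) ^ N = 0 := by
    intro γ hall
    have hrep : rts = Multiset.replicate N γ := Multiset.eq_replicate.mpr ⟨hcard, hall⟩
    have hcp : A.charpoly = (Polynomial.X - Polynomial.C γ) ^ N := by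
      rw [(IsAlgClosed.splits A.charpoly).eq_prod_roots_of_monic A.charpoly_monic]
      rw [← hrts, hrep, Multiset.map_replicate, Multiset.prod_replicate]
    have hCH := A.aeval_self_charpoly
    rw [hcp, map_pow, map_sub, Polynomial.aeval_X, Polynomial.aeval_C] at hCH
    rw [← hCH]
    congr 2
    rw [Algebra.algebraMap_eq_smul_one]
  -- coefficient extraction
  have hext : ∀ c : ℤ, A = ((c : ℂ)) • 1 → v = c • 1 := by
    intro c hAc
    ext g
    have h1 : ((v.coeff g : ℤ) : ℂ) = A g 1 := by
      rw [hA]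
      show _ = vC.coeff (g * 1⁻¹)
      rw [inv_one, mul_one, hvC, redH_apply]
    rw [hAc] at h1
    have h2 : ((c : ℂ)• (1: Matrix G G ℂ)) g 1 = (c : ℂ) * (if g = 1 then 1 else 0) := by
      rw [Matrix.smul_apply, Matrix.one_apply]
      simp
    rw [h2] at h1
    have h3 : (v.coeff g : ℂ) = (((c • (1 : MonoidAlgebra ℤ G)).coeff g : ℤ) : ℂ) := by
      rw [h1]
      rw [MonoidAlgebra.coeff_smul, Finsupp.smul_apply, MonoidAlgebra.one_def, MonoidAlgebra.coeff_single, Finsupp.single_apply]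
      by_cases hg : g = 1
      · subst hg; simp
      · rw [if_neg hg, if_neg (fun h => hg h.symm)]
        simp
    have := Int.cast_injective (α := ℂ) h3
    rw [this]
  rcases hb3 with hb1 | ⟨hbm1, hp2⟩
  · -- v 1 = 1 : all roots are 1, A = 1, v = 1
    left
    have hall : ∀ r ∈ rts, r = 1 := by
      apply allone rts habs
      rw [hsum_re, hb1, hcard]
      simp
    have hnil := hCHγ 1 hall
    rw [one_smul] at hnil
    have hM : A - 1 = 0 := by
      apply nilp (A - 1) N p hnil hp.ne_zero
      rw [add_sub_cancel]
      exact hApow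
    have hA1 : A = 1 := by rwa [sub_eq_zero] at hM
    have := hext 1 (by rw [hA1]; simp)
    rw [this, one_smul]
  · -- v 1 = -1, p = 2 : all roots are -1, A = -1, v = -1
    right
    refine ⟨?_, hp2⟩
    have neg_msum : ∀ s : Multiset ℂ, (s.map (fun z => -z)).sum = -s.sum := by
      intro s
      induction s using Multiset.induction_on with
      | empty => simp
      | cons a t ih => simp [ih]; ring
    have hall : ∀ r ∈ rts, r = -1 := by
      have h1 : ∀ z ∈ rts.map (fun z : ℂ => -z), ‖z‖ = 1 := by
        intro z hz
        obtain ⟨r, hr, rfl⟩ := Multiset.mem_map.mp hz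
        rw [norm_neg]
        exact habs r hr
      have h2 : ((rts.map (fun z : ℂ => -z)).map Complex.re).sum
          = (Multiset.card (rts.map (fun z : ℂ => -z)) : ℝ) := by
        rw [re_msum, neg_msum, Multiset.card_map, hcard, ← htr2, htr, hbm1]
        simp
      have h3 := allone _ h1 h2
      intro r hr
      have := h3 (-r) (Multiset.mem_map_of_mem _ hr)
      linear_combination -this
    have hnil := hCHγ (-1) hall
    have hnil' : (-A - 1) ^ N = 0 := by
      have h9 : (-A - 1 : Matrix G G ℂ) = -(A - (-1 : ℂ) • 1) := by
        rw [neg_smul, one_smul, sub_neg_eq_add]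
        abel
      rw [h9, neg_pow, hnil, mul_zero]
    have hB : (-A : Matrix G G ℂ) ^ 2 = 1 := by
      rw [neg_pow]
      simp only [neg_one_sq, one_mul]
      rw [← hp2]
      exact hApow
    have hM : -A - 1 = 0 := by
      apply nilp (-A - 1) N 2 hnil' (by norm_num)
      rw [add_sub_cancel]
      exact hB
    have hAm1 : A = -1 := by
      have h10 : (-A : Matrix G G ℂ) = 1 := by rwa [sub_eq_zero] at hM
      rw [← neg_neg A, h10]
    have := hext (-1) (by rw [hAm1]; simp)
    rw [this]
    simp



theorem main {G : Type*} [Group G] [Fintype G]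
    (p : ℕ) (hp : p.Prime) (n : ℕ) (hn : 0 < n)
    (u : (MonoidAlgebra ℤ G)ˣ) (haug : aug (u : MonoidAlgebra ℤ G) = 1)
    (hord : orderOf u = p ^ n) :
    ∃ g : G, orderOf g = p ^ n := by
  classical
  by_contra hno
  haveI : Fact p.Prime := ⟨hp⟩
  set v : MonoidAlgebra ℤ G := ↑(u ^ p ^ (n-1)) with hv
  have hvp : v ^ p = 1 := by
    rw [hv, ← Units.val_pow_eq_pow_val, ← pow_mul]
    have : p ^ (n-1) * p = p ^ n := by
      rw [← pow_succ]
      congr 1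
      omega
    rw [this, ← hord, pow_orderOf_eq_one, Units.val_one]
  have hb := coeff_one_mod_p p n hn u hord hno
  rw [← hv] at hb
  -- augmentation of v is 1
  set Φ : MonoidAlgebra ℤ G →ₐ[ℤ] ℤ := MonoidAlgebra.lift ℤ ℤ G (1 : G →* ℤ) with hΦ
  have haug_eq : ∀ x : MonoidAlgebra ℤ G, aug x = Φ x := by
    intro x
    rw [hΦ, MonoidAlgebra.lift_apply]
    unfold aug
    apply Finsupp.sum_congr
    intro g _
    simp
  have haugv : aug v = 1 := by
    rw [haug_eq, hv, Units.val_pow_eq_pow_val, map_pow]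
    rw [← haug_eq, haug, one_pow]
  rcases rigid p hp v hvp hb with h1 | ⟨h2, _⟩
  · have hu1 : u ^ p ^ (n-1) = 1 := Units.ext h1
    have hdvd : orderOf u ∣ p ^ (n-1) := orderOf_dvd_of_pow_eq_one hu1
    rw [hord] at hdvd
    have hle := Nat.le_of_dvd (pow_pos hp.pos _) hdvd
    have hlt : p ^ (n-1) < p ^ n := Nat.pow_lt_pow_right hp.one_lt (by omega)
    omega
  · rw [h2, haug_eq] at haugv
    rw [map_neg, map_one] at haugv
    exact absurd haugv (by norm_num)

end CL

/-- (Cohn–Livingstone) If `V(ℤG)` contains an element of order `pⁿ` for a prime `p` and a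
positive integer `n`, then `G` contains an element of order `pⁿ`. -/
theorem exists_elem_of_prime_power_order {G : Type*} [Group G] [Fintype G]
    (p : ℕ) (hp : p.Prime) (n : ℕ) (hn : 0 < n)
    (u : (MonoidAlgebra ℤ G)ˣ) (haug : aug (u : MonoidAlgebra ℤ G) = 1)
    (hord : orderOf u = p ^ n) :
    ∃ g : G, orderOf g = p ^ n := by
  exact CL.main p hp n hn u haug hord
end
end

section
/- Let G be a finite group, let u ∈ V(ℤG) be of order n, and let ζ be a primitive complex n-th root of unity. Then for every character χ of a complex representation of G (extended ℤ-linearly to ℤG) and every integer ℓ, the number (1/n) · ∑_{d ∣ n} Tr_{ℚ(ζ^d)/ℚ}( χ(u^d) · ζ^{−dℓ} ) is a non-negative integer, where Tr_{E/ℚ} denotes the number-theoretic field trace and χ(u^d) = ∑_C ε_C(u^d) χ(C) lies in the cyclotomic field ℚ(ζ). -/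
open MonoidAlgebra

noncomputable section

/-- The `ℤ`-linear extension of a class function `χ : G → ℂ` (e.g. the character of a
complex representation of `G`) to the group ring `ℤG`: `χ(u) = ∑_g u_g χ(g)`. -/
def charExt {G : Type*} [Group G] [Fintype G] (χ : G → ℂ) (u : MonoidAlgebra ℤ G) : ℂ :=
  ∑ g : G, (u.coeff g : ℂ) * χ g

open scoped Classical in
/-- The number-theoretic trace `Tr_{E/ℚ}` of a complex number lying in a subfield
`E` of `ℂ` (junk value `0` if the number does not lie in `E`). -/
def fieldTrace (E : IntermediateField ℚ ℂ) (x : ℂ) : ℚ :=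
  if hx : x ∈ E then Algebra.trace ℚ E ⟨x, hx⟩ else 0

section auxiliary
open Polynomial

lemma trace_idem {k : ℕ} (P : Matrix (Fin k) (Fin k) ℂ) (h : P * P = P) :
    ∃ m : ℕ, P.trace = m := by
  classical
  set f := Matrix.toLin' P with hf
  have hff : ∀ x, f (f x) = f x := by
    intro x
    rw [hf, ← Matrix.toLin'_mul_apply, h]
  have hproj : LinearMap.IsProj (LinearMap.range f) f :=
    ⟨fun x => LinearMap.mem_range_self f x, fun x hx => by obtain ⟨y, rfl⟩ := hx; exact hff y⟩
  refine ⟨Module.finrank ℂ (LinearMap.range f), ?_⟩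
  have h1 := hproj.trace
  rw [LinearMap.trace_eq_matrix_trace ℂ (Pi.basisFun ℂ (Fin k)) f, hf,
    LinearMap.toMatrix_eq_toMatrix', LinearMap.toMatrix'_toLin'] at h1
  exact h1

lemma geom_lemma {n : ℕ} (hn : 0 < n) {ζ : ℂ} (hζ : IsPrimitiveRoot ζ n) (a : ℤ) :
    ∑ g ∈ Finset.range n, ζ ^ (a * (g : ℤ)) = if (n : ℤ) ∣ a then (n : ℂ) else 0 := by
  have hζ0 : ζ ≠ 0 := hζ.ne_zero hn.ne'
  have hpow : ∀ g : ℕ, ζ ^ (a * (g : ℤ)) = (ζ ^ a) ^ g := by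
    intro g; rw [zpow_mul, zpow_natCast]
  have hone : (ζ ^ a) ^ n = 1 := by
    rw [← zpow_natCast, ← zpow_mul, mul_comm, zpow_mul, zpow_natCast, hζ.pow_eq_one, one_zpow]
  split_ifs with hdvd
  · obtain ⟨t, rfl⟩ := hdvd
    have h1 : ζ ^ ((n : ℤ) * t) = 1 := by
      rw [zpow_mul, zpow_natCast, hζ.pow_eq_one, one_zpow]
    simp [hpow, h1]
  · have h1 : ζ ^ a ≠ 1 := by
      intro h
      exact hdvd (hζ.zpow_eq_one_iff_dvd a |>.mp h)
    simp only [hpow]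
    rw [geom_sum_eq h1, hone, sub_self, zero_div]

lemma nthRootsFinset_eq_image {n : ℕ} (hn : 0 < n) {ζ : ℂ} (hζ : IsPrimitiveRoot ζ n) :
    Polynomial.nthRootsFinset n (1 : ℂ) = (Finset.range n).image (ζ ^ ·) := by
  ext x
  simp only [Polynomial.mem_nthRootsFinset hn, Finset.mem_image, Finset.mem_range]
  constructor
  · intro hx
    haveI : NeZero n := ⟨hn.ne'⟩
    obtain ⟨i, hi, hix⟩ := hζ.eq_pow_of_pow_eq_one hx
    exact ⟨i, hi, hix⟩
  · rintro ⟨i, _, rfl⟩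
    rw [← pow_mul, mul_comm, pow_mul, hζ.pow_eq_one, one_pow]

lemma sum_divisors_primitiveRoots {n : ℕ} (hn : 0 < n) {ζ : ℂ} (hζ : IsPrimitiveRoot ζ n)
    (f : ℂ → ℂ) :
    ∑ d ∈ n.divisors, ∑ η ∈ primitiveRoots (n / d) ℂ, f η
      = ∑ g ∈ Finset.range n, f (ζ ^ g) := by
  rw [Nat.sum_div_divisors n (fun d => ∑ η ∈ primitiveRoots d ℂ, f η)]
  rw [← Finset.sum_biUnion (fun i _ j _ hij => IsPrimitiveRoot.disjoint hij)]
  rw [← IsPrimitiveRoot.nthRoots_one_eq_biUnion_primitiveRoots, nthRootsFinset_eq_image hn hζ]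
  rw [Finset.sum_image]
  intro i hi j hj hij
  exact hζ.pow_inj (Finset.mem_range.mp hi) (Finset.mem_range.mp hj) hij

lemma int_dvd_iff_mod {n d g : ℕ} (hg : g < n) :
    (n : ℤ) ∣ ((d : ℤ) - (g : ℤ)) ↔ g = d % n := by
  rw [← Nat.modEq_iff_dvd, Nat.ModEq, Nat.mod_eq_of_lt hg]

end auxiliary

set_option maxHeartbeats 4000000 in
/-- (Luthar–Passi) Let `u ∈ V(ℤG)` be of order `n` and `ζ` a primitive complex `n`-th root
of unity. For every character `χ` of a complex representation `D` of `G` and every integer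
`ℓ`, the number `(1/n) ∑_{d ∣ n} Tr_{ℚ(ζ^d)/ℚ}(χ(u^d) ζ^{-dℓ})` is a non-negative
integer. -/
theorem luthar_passi {G : Type*} [Group G] [Fintype G]
    (u : (MonoidAlgebra ℤ G)ˣ) (haug : aug (u : MonoidAlgebra ℤ G) = 1)
    (n : ℕ) (hn : 0 < n) (hord : orderOf u = n)
    (ζ : ℂ) (hζ : IsPrimitiveRoot ζ n)
    (k : ℕ) (D : G →* Matrix (Fin k) (Fin k) ℂ) (ℓ : ℤ) :
    ∃ N : ℕ, (N : ℚ) = (1 / n) * ∑ d ∈ n.divisors,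
      fieldTrace (IntermediateField.adjoin ℚ {ζ ^ d})
        (charExt (fun g => (D g).trace)
            ((u ^ d : (MonoidAlgebra ℤ G)ˣ) : MonoidAlgebra ℤ G) * ζ ^ (-(d : ℤ) * ℓ)) := by
  classical
  set χ : G → ℂ := fun g => (D g).trace with hχ
  have hζ0 : ζ ≠ 0 := hζ.ne_zero hn.ne'
  have hnC : (n : ℂ) ≠ 0 := Nat.cast_ne_zero.mpr hn.ne'
  set φ : MonoidAlgebra ℤ G →ₐ[ℤ] Matrix (Fin k) (Fin k) ℂ :=
    (MonoidAlgebra.lift ℤ (Matrix (Fin k) (Fin k) ℂ) G) D with hφ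
  set M : Matrix (Fin k) (Fin k) ℂ := φ ↑u with hMdef
  have hM : M ^ n = 1 := by
    rw [hMdef, ← map_pow, ← Units.val_pow_eq_pow_val, ← hord, pow_orderOf_eq_one]
    exact map_one φ
  have hchar : ∀ v : MonoidAlgebra ℤ G, charExt χ v = (φ v).trace := by
    intro v
    have h1 : φ v = v.coeff.sum fun a b => b • D a := by
      rw [hφ]; exact MonoidAlgebra.lift_apply D v
    rw [charExt, h1, Finsupp.sum, Matrix.trace_sum]
    rw [← Finset.sum_subset (Finset.subset_univ v.coeff.support)
      (fun g _ hg => by rw [Finsupp.notMem_support_iff.mp hg]; simp)]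
    refine Finset.sum_congr rfl fun g _ => ?_
    rw [Matrix.trace_smul, zsmul_eq_mul]
  have hcharpow : ∀ d : ℕ,
      charExt χ ((u ^ d : (MonoidAlgebra ℤ G)ˣ) : MonoidAlgebra ℤ G) = (M ^ d).trace := by
    intro d
    rw [hchar, Units.val_pow_eq_pow_val, map_pow]
  -- r₀
  set r₀ : ℕ := (ℓ % n).toNat with hr₀def
  have hr₀ : (r₀ : ℤ) = ℓ % n :=
    Int.toNat_of_nonneg (Int.emod_nonneg ℓ (by exact_mod_cast hn.ne'))
  have hr₀n : r₀ < n := by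
    have := Int.emod_lt_of_pos ℓ (by exact_mod_cast hn : (0:ℤ) < n)
    omega
  have hdvdℓ : (n : ℤ) ∣ (ℓ - r₀) := by
    refine ⟨ℓ / n, ?_⟩
    rw [hr₀]
    have := Int.mul_ediv_add_emod ℓ n
    linarith
  -- the idempotents
  set Pm : ℕ → Matrix (Fin k) (Fin k) ℂ :=
    fun r => (n : ℂ)⁻¹ • ∑ g ∈ Finset.range n, ζ ^ (-((g : ℤ) * r)) • M ^ g with hPmdef
  have hPmEq : ∀ r : ℕ,
      Pm r = (n : ℂ)⁻¹ • ∑ g ∈ Finset.range n, ζ ^ (-((g : ℤ) * r)) • M ^ g := fun r => rfl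
  have hPmulM : ∀ r : ℕ, Pm r * M = ζ ^ (r : ℤ) • Pm r := by
    intro r
    set h : ℕ → Matrix (Fin k) (Fin k) ℂ := fun g => ζ ^ (-((g : ℤ) * r)) • M ^ g with hh
    have h0 : h n = h 0 := by
      rw [hh]
      simp only [Nat.cast_zero, zero_mul, neg_zero, zpow_zero, one_smul, pow_zero, hM]
      rw [show -((n : ℤ) * r) = (n : ℤ) * (-(r : ℤ)) by ring, zpow_mul, zpow_natCast,
        hζ.pow_eq_one, one_zpow, one_smul]
    have hshift : ∑ g ∈ Finset.range n, h (g + 1) = ∑ g ∈ Finset.range n, h g := by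
      have e1 := Finset.sum_range_succ h n
      have e2 := Finset.sum_range_succ' h n
      rw [e1, h0] at e2
      exact (add_right_cancel e2).symm
    calc Pm r * M
        = (n : ℂ)⁻¹ • ∑ g ∈ Finset.range n, ζ ^ (-((g : ℤ) * r)) • M ^ (g + 1) := by
          rw [hPmEq r, smul_mul_assoc, Finset.sum_mul]
          congr 1
          exact Finset.sum_congr rfl fun g _ => by rw [smul_mul_assoc, ← pow_succ]
      _ = (n : ℂ)⁻¹ • ∑ g ∈ Finset.range n, ζ ^ (r : ℤ) • h (g + 1) := by
          congr 1
          refine Finset.sum_congr rfl fun g _ => ?_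
          rw [hh]
          simp only
          rw [smul_smul, ← zpow_add₀ hζ0]
          congr 2
          push_cast
          ring
      _ = ζ ^ (r : ℤ) • Pm r := by
          rw [← Finset.smul_sum, hshift, hPmEq r, smul_comm]
  have hPmulMpow : ∀ r j : ℕ, Pm r * M ^ j = ζ ^ ((j : ℤ) * r) • Pm r := by
    intro r j
    induction j with
    | zero => simp
    | succ j ih =>
      rw [pow_succ, ← mul_assoc, ih, smul_mul_assoc, hPmulM, smul_smul, ← zpow_add₀ hζ0]
      congr 2
      push_cast
      ring
  have hidem : ∀ r, Pm r * Pm r = Pm r := by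
    intro r
    calc Pm r * Pm r
        = Pm r * ((n : ℂ)⁻¹ • ∑ g ∈ Finset.range n, ζ ^ (-((g : ℤ) * r)) • M ^ g) := by
          rw [← hPmEq r]
      _ = (n : ℂ)⁻¹ • ∑ g ∈ Finset.range n, ζ ^ (-((g : ℤ) * r)) • (Pm r * M ^ g) := by
          rw [mul_smul_comm, Finset.mul_sum]
          congr 1
          exact Finset.sum_congr rfl fun g _ => (mul_smul_comm _ _ _)
      _ = (n : ℂ)⁻¹ • ∑ g ∈ Finset.range n, (1 : ℂ) • Pm r := by
          congr 1
          refine Finset.sum_congr rfl fun g _ => ?_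
          rw [hPmulMpow r g, smul_smul, ← zpow_add₀ hζ0]
          norm_num
      _ = Pm r := by
          simp only [one_smul, Finset.sum_const, Finset.card_range]
          rw [← Nat.cast_smul_eq_nsmul ℂ, smul_smul, inv_mul_cancel₀ hnC, one_smul]
  choose m hm using fun r => trace_idem (Pm r) (hidem r)
  have htrPm : ∀ r : ℕ, (Pm r).trace
      = (n : ℂ)⁻¹ * ∑ g ∈ Finset.range n, ζ ^ (-((g : ℤ) * r)) * (M ^ g).trace := by
    intro r
    rw [hPmEq r, Matrix.trace_smul, Matrix.trace_sum, smul_eq_mul]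
    congr 1
    exact Finset.sum_congr rfl fun g _ => by rw [Matrix.trace_smul, smul_eq_mul]
  have htrM : ∀ d : ℕ, (M ^ d).trace = ∑ r ∈ Finset.range n, (m r : ℂ) * ζ ^ ((d : ℤ) * r) := by
    intro d
    have step : ∀ r ∈ Finset.range n, (m r : ℂ) * ζ ^ ((d : ℤ) * r)
        = ∑ g ∈ Finset.range n, (n : ℂ)⁻¹ * (ζ ^ (((d : ℤ) - g) * r) * (M ^ g).trace) := by
      intro r _
      rw [← hm r, htrPm r, Finset.mul_sum, Finset.sum_mul]
      refine Finset.sum_congr rfl fun g _ => ?_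
      rw [show ((d : ℤ) - g) * r = (d : ℤ) * r + -((g : ℤ) * r) by ring, zpow_add₀ hζ0]
      ring
    rw [Finset.sum_congr rfl step, Finset.sum_comm]
    have step2 : ∀ g ∈ Finset.range n,
        ∑ r ∈ Finset.range n, (n : ℂ)⁻¹ * (ζ ^ (((d : ℤ) - g) * r) * (M ^ g).trace)
        = (n : ℂ)⁻¹ * ((if (n : ℤ) ∣ ((d : ℤ) - g) then (n : ℂ) else 0) * (M ^ g).trace) := by
      intro g _
      rw [← Finset.mul_sum, ← Finset.sum_mul, geom_lemma hn hζ]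
    rw [Finset.sum_congr rfl step2]
    have hMd : M ^ d = M ^ (d % n) := by
      conv_lhs => rw [← Nat.div_add_mod d n]
      rw [pow_add, pow_mul, hM, one_pow, one_mul]
    rw [Finset.sum_eq_single (d % n)]
    · rw [if_pos ((int_dvd_iff_mod (Nat.mod_lt d hn)).mpr rfl), inv_mul_cancel_left₀ hnC, hMd]
    · intro g hg hne
      rw [if_neg, zero_mul, mul_zero]
      rw [int_dvd_iff_mod (Finset.mem_range.mp hg)]
      exact hne
    · intro h
      exact absurd (Finset.mem_range.mpr (Nat.mod_lt d hn)) h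
  refine ⟨m r₀, ?_⟩
  -- reduce to a complex identity
  have hzeq : ∀ a b : ℤ, (n : ℤ) ∣ (a - b) → ζ ^ a = ζ ^ b := by
    rintro a b ⟨t, ht⟩
    have hab : a = b + (n : ℤ) * t := by linarith
    rw [hab, zpow_add₀ hζ0, zpow_mul, zpow_natCast, hζ.pow_eq_one, one_zpow, mul_one]
  have key : ∀ d ∈ n.divisors,
      (algebraMap ℚ ℂ) (fieldTrace (IntermediateField.adjoin ℚ {ζ ^ d})
        (charExt χ ((u ^ d : (MonoidAlgebra ℤ G)ˣ) : MonoidAlgebra ℤ G) * ζ ^ (-(d : ℤ) * ℓ)))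
      = ∑ η ∈ primitiveRoots (n / d) ℂ,
          ∑ r ∈ Finset.range n, (m r : ℂ) * η ^ ((r : ℤ) - (r₀ : ℤ)) := by
    intro d hd
    obtain ⟨hdvd, -⟩ := Nat.mem_divisors.mp hd
    have hdpos : 0 < d := Nat.pos_of_mem_divisors hd
    set m' : ℕ := n / d with hm'def
    have hm'pos : 0 < m' := Nat.div_pos (Nat.le_of_dvd hn hdvd) hdpos
    have hζd : IsPrimitiveRoot (ζ ^ d) m' :=
      hζ.pow hn (by rw [hm'def]; exact (Nat.mul_div_cancel' hdvd).symm)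
    set E : IntermediateField ℚ ℂ := IntermediateField.adjoin ℚ {ζ ^ d} with hEdef
    set ζE : E := ⟨ζ ^ d, IntermediateField.mem_adjoin_simple_self ℚ (ζ ^ d)⟩ with hζEdef
    have hζE : IsPrimitiveRoot ζE m' := by
      rw [← IsPrimitiveRoot.coe_submonoidClass_iff]
      exact hζd
    have hζE0 : ζE ≠ 0 := hζE.ne_zero hm'pos.ne'
    have hint : IsIntegral ℚ (ζ ^ d) := (hζd.isIntegral hm'pos).tower_top
    have HE : E.toSubalgebra = Algebra.adjoin ℚ {ζ ^ d} :=
      IntermediateField.adjoin_simple_toSubalgebra_of_isAlgebraic hint.isAlgebraic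
    set M' : ℕ+ := ⟨m', hm'pos⟩ with hM'def
    have hζdP : IsPrimitiveRoot (ζ ^ d) ((M' : ℕ+) : ℕ) := hζd
    have hζEP : IsPrimitiveRoot ζE ((M' : ℕ+) : ℕ) := hζE
    haveI hcyc : IsCyclotomicExtension {((M' : ℕ+) : ℕ)} ℚ E := by
      refine IsCyclotomicExtension.equiv _ _ _ (h := ?_) (.refl : E.toSubalgebra ≃ₐ[ℚ] _)
      rw [HE]
      exact hζdP.adjoin_isCyclotomicExtension ℚ
    haveI : FiniteDimensional ℚ E :=
      IsCyclotomicExtension.finiteDimensional {((M' : ℕ+) : ℕ)} ℚ E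
    set x : E := ∑ r ∈ Finset.range n, (m r : E) * ζE ^ ((r : ℤ) - (r₀ : ℤ)) with hxdef
    have hxcoe : (x : ℂ) = ∑ r ∈ Finset.range n, (m r : ℂ) * (ζ ^ d) ^ ((r : ℤ) - (r₀ : ℤ)) := by
      have : (x : ℂ) = algebraMap E ℂ x := rfl
      rw [this, hxdef, map_sum]
      refine Finset.sum_congr rfl fun r _ => ?_
      rw [map_mul, map_natCast, map_zpow₀]
      rfl
    have hval : charExt χ ((u ^ d : (MonoidAlgebra ℤ G)ˣ) : MonoidAlgebra ℤ G)
        * ζ ^ (-(d : ℤ) * ℓ) = (x : ℂ) := by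
      rw [hcharpow d, htrM d, Finset.sum_mul, hxcoe]
      refine Finset.sum_congr rfl fun r _ => ?_
      rw [mul_assoc, ← zpow_natCast ζ d, ← zpow_mul, ← zpow_add₀ hζ0]
      congr 1
      apply hzeq
      have : (d : ℤ) * r + -(d : ℤ) * ℓ - (d : ℤ) * ((r : ℤ) - (r₀ : ℤ))
          = -(d : ℤ) * (ℓ - (r₀ : ℤ)) := by ring
      rw [this]
      exact hdvdℓ.mul_left _
    have hft : fieldTrace E ((x : ℂ)) = Algebra.trace ℚ E x := by
      unfold fieldTrace
      rw [dif_pos x.2]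
    have hirr : Irreducible (Polynomial.cyclotomic ((M' : ℕ+) : ℕ) ℚ) :=
      Polynomial.cyclotomic.irreducible_rat hm'pos
    have htr := trace_eq_sum_embeddings (E := ℂ) (K := ℚ) (L := E) (x := x)
    have hσ : ∀ σ : E →ₐ[ℚ] ℂ,
        σ x = ∑ r ∈ Finset.range n, (m r : ℂ) * (σ ζE) ^ ((r : ℤ) - (r₀ : ℤ)) := by
      intro σ
      rw [hxdef, map_sum]
      refine Finset.sum_congr rfl fun r _ => ?_
      rw [map_mul, map_natCast, map_zpow₀]
    set e := hζEP.embeddingsEquivPrimitiveRoots ℂ hirr with hedef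
    have hσζ : ∀ σ : E →ₐ[ℚ] ℂ, σ ζE = ((e σ : ℂ)) := fun σ =>
      (hζEP.embeddingsEquivPrimitiveRoots_apply_coe ℂ hirr σ).symm
    rw [hval, hft, htr]
    calc ∑ σ : E →ₐ[ℚ] ℂ, σ x
        = ∑ σ : E →ₐ[ℚ] ℂ, ∑ r ∈ Finset.range n,
            (m r : ℂ) * ((e σ : ℂ)) ^ ((r : ℤ) - (r₀ : ℤ)) := by
          refine Finset.sum_congr rfl fun σ _ => ?_
          rw [hσ σ]
          refine Finset.sum_congr rfl fun r _ => ?_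
          rw [hσζ σ]
      _ = ∑ p : {y // y ∈ primitiveRoots ((M' : ℕ+) : ℕ) ℂ}, ∑ r ∈ Finset.range n,
            (m r : ℂ) * ((p : ℂ)) ^ ((r : ℤ) - (r₀ : ℤ)) :=
          Equiv.sum_comp e
            (fun p : {y // y ∈ primitiveRoots ((M' : ℕ+) : ℕ) ℂ} =>
              ∑ r ∈ Finset.range n, (m r : ℂ) * (p : ℂ) ^ ((r : ℤ) - (r₀ : ℤ)))
      _ = ∑ η ∈ primitiveRoots ((M' : ℕ+) : ℕ) ℂ, ∑ r ∈ Finset.range n,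
            (m r : ℂ) * η ^ ((r : ℤ) - (r₀ : ℤ)) :=
          Finset.sum_coe_sort (primitiveRoots ((M' : ℕ+) : ℕ) ℂ)
            (fun y => ∑ r ∈ Finset.range n, (m r : ℂ) * y ^ ((r : ℤ) - (r₀ : ℤ)))
      _ = ∑ η ∈ primitiveRoots m' ℂ, ∑ r ∈ Finset.range n,
            (m r : ℂ) * η ^ ((r : ℤ) - (r₀ : ℤ)) := rfl
  have total : ∑ d ∈ n.divisors,
      (algebraMap ℚ ℂ) (fieldTrace (IntermediateField.adjoin ℚ {ζ ^ d})
        (charExt χ ((u ^ d : (MonoidAlgebra ℤ G)ˣ) : MonoidAlgebra ℤ G) * ζ ^ (-(d : ℤ) * ℓ)))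
      = (n : ℂ) * (m r₀ : ℂ) := by
    rw [Finset.sum_congr rfl key]
    rw [sum_divisors_primitiveRoots hn hζ]
    have hterm : ∀ g ∈ Finset.range n,
        ∑ r ∈ Finset.range n, (m r : ℂ) * (ζ ^ g) ^ ((r : ℤ) - (r₀ : ℤ))
        = ∑ r ∈ Finset.range n, (m r : ℂ) * ζ ^ (((r : ℤ) - (r₀ : ℤ)) * g) := by
      intro g _
      refine Finset.sum_congr rfl fun r _ => ?_
      rw [← zpow_natCast ζ g, ← zpow_mul, mul_comm ((g : ℤ))]
    rw [Finset.sum_congr rfl hterm, Finset.sum_comm]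
    have : ∀ r ∈ Finset.range n,
        ∑ g ∈ Finset.range n, (m r : ℂ) * ζ ^ (((r : ℤ) - (r₀ : ℤ)) * g)
        = (m r : ℂ) * (if (n : ℤ) ∣ ((r : ℤ) - r₀) then (n : ℂ) else 0) := by
      intro r _
      rw [← Finset.mul_sum, geom_lemma hn hζ]
    rw [Finset.sum_congr rfl this]
    rw [Finset.sum_eq_single r₀ (fun r hr hne => by
        rw [if_neg, mul_zero]
        rw [int_dvd_iff_mod hr₀n, Nat.mod_eq_of_lt (Finset.mem_range.mp hr)]
        exact fun h => hne h.symm)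
      (fun h => absurd (Finset.mem_range.mpr hr₀n) h)]
    rw [if_pos (by simp), mul_comm]
  -- conclude in ℚ
  have hinj : Function.Injective (algebraMap ℚ ℂ) := (algebraMap ℚ ℂ).injective
  have hQ : ∑ d ∈ n.divisors,
      fieldTrace (IntermediateField.adjoin ℚ {ζ ^ d})
        (charExt χ ((u ^ d : (MonoidAlgebra ℤ G)ˣ) : MonoidAlgebra ℤ G) * ζ ^ (-(d : ℤ) * ℓ))
      = (n : ℚ) * (m r₀ : ℚ) := by
    apply hinj
    rw [map_sum, total]
    push_cast
    ring
  rw [hQ]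
  have hnQ : (n : ℚ) ≠ 0 := Nat.cast_ne_zero.mpr hn.ne'
  field_simp
end
end

section
/- Let G be a finite group, let u ∈ V(ℤG) be a torsion unit, let p be a prime, j a non-negative integer, and D a conjugacy class of G. Then ∑_C ε_C(u) ≡ ε_D(u^{p^j}) (mod p), where the sum runs over all conjugacy classes C of G such that the p^j-th powers of elements of C lie in D. -/
open MonoidAlgebra

noncomputable section

open Finset Function
open Fin.NatCast

section FrobeniusTraceAux

variable {p : ℕ} [NeZero p] {M : Type*}

def rotW (p : ℕ) [NeZero p] {M : Type*} (w : Fin p → M) : Fin p → M := fun i => w (i + 1)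

lemma rotW_iterate (k : ℕ) (w : Fin p → M) :
    (rotW p)^[k] w = fun i => w (i + (k : Fin p)) := by
  induction k with
  | zero => simp
  | succ k ih =>
    rw [Function.iterate_succ_apply', ih]
    funext i
    simp only [rotW, Nat.cast_add, Nat.cast_one]
    rw [add_right_comm, add_assoc]

lemma rotW_iterate_p (w : Fin p → M) : (rotW p)^[p] w = w := by
  funext i
  rw [rotW_iterate]
  simp

lemma rotW_iterate_pmul (q : ℕ) (w : Fin p → M) : (rotW p)^[p * q] w = w := by
  rw [Function.iterate_mul]
  induction q with
  | zero => simp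
  | succ q ih => rw [Function.iterate_succ_apply', ih, rotW_iterate_p]

lemma rotW_iterate_mod (k : ℕ) (w : Fin p → M) :
    (rotW p)^[k] w = (rotW p)^[k % p] w := by
  conv_lhs => rw [← Nat.mod_add_div k p, Function.iterate_add_apply, rotW_iterate_pmul]

lemma rotW_injective : Function.Injective (rotW p (M := M)) := by
  have h : Function.LeftInverse ((rotW p (M := M))^[p - 1]) (rotW p) := by
    intro w
    rw [← Function.iterate_succ_apply, Nat.succ_eq_add_one, Nat.sub_add_cancel (NeZero.one_le),
      rotW_iterate_p]
  exact h.injective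

lemma rotW_iterate_injective (k : ℕ) : Function.Injective ((rotW p (M := M))^[k]) :=
  rotW_injective.iterate k

lemma rotW_fixed_const {w : Fin p → M} (h : rotW p w = w) : ∀ i, w i = w 0 := by
  have key : ∀ k : ℕ, w (k : Fin p) = w 0 := by
    intro k
    induction k with
    | zero => simp
    | succ k ih =>
      have := congrFun h (k : Fin p)
      simp only [rotW] at this
      rw [Nat.cast_add, Nat.cast_one, this]
      exact ih
  intro i
  have := key i.val
  rwa [Fin.cast_val_eq_self] at this

lemma rotW_fixed_of_iterate (hp : p.Prime) {w : Fin p → M} {d : ℕ} (hd0 : 0 < d) (hdp : d < p)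
    (h : (rotW p)^[d] w = w) : rotW p w = w := by
  have hper : Function.IsPeriodicPt (rotW p) d w := h
  have h1 : Function.minimalPeriod (rotW p) w ∣ d := hper.minimalPeriod_dvd
  have h2 : Function.minimalPeriod (rotW p) w ∣ p :=
    Function.IsPeriodicPt.minimalPeriod_dvd (rotW_iterate_p w)
  rcases hp.eq_one_or_self_of_dvd _ h2 with hm | hm
  · have := Function.isPeriodicPt_minimalPeriod (rotW p) w
    rw [hm] at this
    exact this
  · exfalso
    have := Nat.le_of_dvd hd0 h1
    omega

section Orb
variable [Fintype M] [DecidableEq M]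

def orbW (p : ℕ) [NeZero p] {M : Type*} [Fintype M] [DecidableEq M] (w : Fin p → M) :
    Finset (Fin p → M) :=
  Finset.image (fun k : Fin p => (rotW p)^[k.val] w) Finset.univ

lemma mem_orbW {w z : Fin p → M} : z ∈ orbW p w ↔ ∃ k : ℕ, (rotW p)^[k] w = z := by
  constructor
  · intro hz
    rw [orbW, Finset.mem_image] at hz
    obtain ⟨k, _, hk⟩ := hz
    exact ⟨k.val, hk⟩
  · rintro ⟨k, hk⟩
    rw [orbW, Finset.mem_image]
    exact ⟨⟨k % p, Nat.mod_lt _ (NeZero.pos p)⟩, Finset.mem_univ _,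
      by rw [← rotW_iterate_mod, hk]⟩

lemma orbW_eq {w z : Fin p → M} (hz : z ∈ orbW p w) : orbW p z = orbW p w := by
  obtain ⟨l, hl⟩ := mem_orbW.mp hz
  ext x
  rw [mem_orbW, mem_orbW]
  constructor
  · rintro ⟨k, hk⟩
    exact ⟨k + l, by rw [Function.iterate_add_apply, hl, hk]⟩
  · rintro ⟨k, hk⟩
    refine ⟨(p - l % p) + k, ?_⟩
    rw [← hl, ← Function.iterate_add_apply]
    have hmd : p - l % p + k + l = k + p * (1 + l / p) := by
      have h1 : l % p < p := Nat.mod_lt _ (NeZero.pos p)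
      have h2 : l % p + p * (l / p) = l := Nat.mod_add_div l p
      have h3 : p * (1 + l / p) = p + p * (l / p) := by ring
      omega
    rw [hmd, Function.iterate_add_apply, rotW_iterate_pmul, hk]

lemma orbW_nonfixed_inj (hp : p.Prime) {w : Fin p → M} (hw : ¬ rotW p w = w) :
    Function.Injective fun k : Fin p => (rotW p)^[k.val] w := by
  have key : ∀ k₁ k₂ : Fin p, k₁.val ≤ k₂.val →
      (rotW p)^[k₁.val] w = (rotW p)^[k₂.val] w → k₁ = k₂ := by
    intro k₁ k₂ hle h
    by_contra hne
    have hd0 : 0 < k₂.val - k₁.val := by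
      have : k₁.val ≠ k₂.val := fun hh => hne (Fin.ext hh)
      omega
    have hdp : k₂.val - k₁.val < p := by
      have := k₂.isLt
      omega
    apply hw
    apply rotW_fixed_of_iterate hp hd0 hdp
    apply rotW_iterate_injective k₁.val
    rw [← Function.iterate_add_apply]
    have hadd : k₁.val + (k₂.val - k₁.val) = k₂.val := by omega
    rw [hadd, h]
  intro k₁ k₂ h
  rcases le_total k₁.val k₂.val with hle | hle
  · exact key _ _ hle h
  · exact (key _ _ hle h.symm).symm

lemma card_orbW (hp : p.Prime) {w : Fin p → M} (hw : ¬ rotW p w = w) : (orbW p w).card = p := by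
  rw [orbW, Finset.card_image_of_injective _ (orbW_nonfixed_inj hp hw), Finset.card_univ,
    Fintype.card_fin]

lemma sum_rotW_invariant (hp : p.Prime) (F : (Fin p → M) → ZMod p)
    (hF : ∀ w, F (rotW p w) = F w) :
    ∑ w : Fin p → M, F w = ∑ m : M, F (fun _ => m) := by
  have hFk : ∀ (k : ℕ) (w : Fin p → M), F ((rotW p)^[k] w) = F w := by
    intro k
    induction k with
    | zero => intro w; simp
    | succ k ih =>
      intro w
      rw [Function.iterate_succ_apply', hF, ih]
  have hsplit := Finset.sum_filter_add_sum_filter_not Finset.univ (fun w => rotW p w = w) F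
  have hfix : ∑ w ∈ Finset.univ.filter (fun w => rotW p w = w), F w
      = ∑ m : M, F (fun _ => m) := by
    have himg : Finset.univ.filter (fun w : Fin p → M => rotW p w = w)
        = Finset.univ.image (fun m : M => (fun _ => m : Fin p → M)) := by
      ext w
      simp only [Finset.mem_filter, Finset.mem_image, Finset.mem_univ, true_and]
      constructor
      · intro h
        exact ⟨w 0, funext fun i => (rotW_fixed_const h i).symm⟩
      · rintro ⟨m, rfl⟩
        funext i
        rfl
    rw [himg, Finset.sum_image]
    intro m _ m' _ hmm
    exact congrFun hmm 0
  have hnon : ∑ w ∈ Finset.univ.filter (fun w => ¬ rotW p w = w), F w = 0 := by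
    set s := Finset.univ.filter (fun w : Fin p → M => ¬ rotW p w = w) with hs
    rw [← Finset.sum_fiberwise_of_maps_to (g := orbW p) (t := s.image (orbW p))
      (fun x hx => Finset.mem_image_of_mem _ hx) F]
    apply Finset.sum_eq_zero
    intro O hO
    obtain ⟨w₀, hw₀s, hw₀⟩ := Finset.mem_image.mp hO
    have hw₀nf : ¬ rotW p w₀ = w₀ := by
      rw [hs] at hw₀s
      simpa using hw₀s
    have hfiber : s.filter (fun y => orbW p y = O) = orbW p w₀ := by
      ext y
      simp only [Finset.mem_filter, hs, Finset.mem_univ, true_and, ← hw₀]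
      constructor
      · rintro ⟨_, horb⟩
        rw [← horb]
        exact mem_orbW.mpr ⟨0, rfl⟩
      · intro hy
        obtain ⟨k, hk⟩ := mem_orbW.mp hy
        refine ⟨?_, orbW_eq hy⟩
        intro hfix'
        apply hw₀nf
        apply rotW_iterate_injective k
        calc (rotW p)^[k] (rotW p w₀) = (rotW p)^[k+1] w₀ :=
              (Function.iterate_succ_apply _ _ _).symm
          _ = rotW p ((rotW p)^[k] w₀) := Function.iterate_succ_apply' _ _ _
          _ = (rotW p)^[k] w₀ := by rw [hk]; exact hfix'
    rw [hfiber]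
    have hconst : ∀ y ∈ orbW p w₀, F y = F w₀ := by
      intro y hy
      obtain ⟨k, hk⟩ := mem_orbW.mp hy
      rw [← hk, hFk]
    rw [Finset.sum_congr rfl hconst, Finset.sum_const, card_orbW hp hw₀nf]
    simp
  rw [← hsplit, hfix, hnon, add_zero]

end Orb

section Trace
variable {R : Type*} [Ring R] {A : Type*} [AddCommMonoid A]

lemma trace_list_rotate (T : R →+ A) (hT : ∀ x y : R, T (x * y) = T (y * x)) (l : List R) :
    T (l.rotate 1).prod = T l.prod := by
  cases l with
  | nil => simp
  | cons x xs =>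
    rw [List.rotate_cons_succ, List.rotate_zero, List.prod_append, List.prod_singleton,
      hT, ← List.prod_cons]

lemma ofFn_shift {α : Type*} (hp1 : 1 < p) (v : Fin p → α) :
    (List.ofFn fun i => v (i + 1)) = (List.ofFn v).rotate 1 := by
  apply List.ext_getElem
  · simp
  intro i h1 h2
  rw [List.getElem_ofFn, List.getElem_rotate, List.getElem_ofFn]
  congr 1
  apply Fin.ext
  simp [Fin.add_def, Fin.val_one', Nat.mod_eq_of_lt hp1]

lemma add_pow_eq_sum_words (a b : R) (n : ℕ) :
    (a + b) ^ n = ∑ w : Fin n → Bool, (List.ofFn fun i => if w i then a else b).prod := by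
  induction n with
  | zero => simp
  | succ n ih =>
    rw [show ∀ x : R, x ^ (n+1) = x * x ^ n from fun x => pow_succ' x n, ih, Finset.mul_sum,
      ← Equiv.sum_comp (Fin.consEquiv (fun _ : Fin (n + 1) => Bool))
        (fun w => (List.ofFn fun i => if w i then a else b).prod),
      Fintype.sum_prod_type]
    simp only [Fin.consEquiv_apply, List.ofFn_succ, Fin.cons_zero, Fin.cons_succ, List.prod_cons,
      Fintype.sum_bool]
    rw [← Finset.sum_add_distrib]
    exact Finset.sum_congr rfl fun w _ => by norm_num [add_mul]

lemma trace_add_pow (hp : p.Prime) (T : R →+ ZMod p) (hT : ∀ x y : R, T (x * y) = T (y * x))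
    (a b : R) : T ((a + b) ^ p) = T (a ^ p) + T (b ^ p) := by
  rw [add_pow_eq_sum_words, map_sum]
  have key := sum_rotW_invariant hp
    (F := fun w : Fin p → Bool => T (List.ofFn fun i => if w i then a else b).prod)
    (fun w => by
      show T (List.ofFn fun i => if w (i + 1) then a else b).prod = _
      rw [show (fun i => if w (i + 1) then a else b)
            = fun i => (fun i' => if w i' then a else b) (i + 1) from rfl,
        ofFn_shift hp.one_lt (fun i' => if w i' then a else b), trace_list_rotate T hT])
  rw [key]
  simp [List.ofFn_const, List.prod_replicate]

lemma trace_sum_pow (hp : p.Prime) (T : R →+ ZMod p) (hT : ∀ x y : R, T (x * y) = T (y * x))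
    {ι : Type*} (s : Finset ι) (f : ι → R) :
    T ((∑ i ∈ s, f i) ^ p) = ∑ i ∈ s, T (f i ^ p) := by
  induction s using Finset.cons_induction with
  | empty => simp [zero_pow hp.ne_zero]
  | cons i s his ih =>
    rw [Finset.sum_cons, trace_add_pow hp T hT, ih, Finset.sum_cons]

end Trace

section GroupRing
open MonoidAlgebra
variable {G : Type*} [Group G] [Fintype G]

def Tc (p : ℕ) {G : Type*} [Group G] [Fintype G] (c : G → ZMod p) :
    MonoidAlgebra (ZMod p) G →+ ZMod p where
  toFun x := ∑ g : G, c g * x.coeff g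
  map_zero' := by simp
  map_add' x y := by
    have h : ∀ g : G, (x + y).coeff g = x.coeff g + y.coeff g := fun g => rfl
    simp [h, mul_add, Finset.sum_add_distrib]

lemma Tc_apply (c : G → ZMod p) (x : MonoidAlgebra (ZMod p) G) :
    Tc p c x = ∑ g : G, c g * x.coeff g := rfl

lemma Tc_single (c : G → ZMod p) (g : G) (α : ZMod p) :
    Tc p c (MonoidAlgebra.single g α) = c g * α := by
  classical
  rw [Tc_apply, Finset.sum_eq_single g]
  · rw [MonoidAlgebra.coeff_single, Finsupp.single_apply]
    simp
  · intro h _ hne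
    rw [MonoidAlgebra.coeff_single, Finsupp.single_apply, if_neg (Ne.symm hne), mul_zero]
  · simp

lemma Tc_single_mul_comm (c : G → ZMod p) (hc : ∀ g h : G, c (g * h) = c (h * g))
    (a : G) (b : ZMod p) (y : MonoidAlgebra (ZMod p) G) :
    Tc p c (MonoidAlgebra.single a b * y) = Tc p c (y * MonoidAlgebra.single a b) := by
  induction y using MonoidAlgebra.induction with
  | zero => simp
  | single_add a' b' f' _ _ ih' =>
    rw [mul_add, add_mul, map_add, map_add, ih']
    congr 1
    rw [MonoidAlgebra.single_mul_single, MonoidAlgebra.single_mul_single,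
      Tc_single, Tc_single, hc, mul_comm b b']

lemma Tc_mul_comm (c : G → ZMod p) (hc : ∀ g h : G, c (g * h) = c (h * g))
    (x y : MonoidAlgebra (ZMod p) G) : Tc p c (x * y) = Tc p c (y * x) := by
  induction x using MonoidAlgebra.induction with
  | zero => simp
  | single_add a b f _ _ ih =>
    rw [add_mul, mul_add, map_add, map_add, ih]
    congr 1
    exact Tc_single_mul_comm c hc a b y

lemma sum_univ_single (y : MonoidAlgebra (ZMod p) G) :
    ∑ g : G, MonoidAlgebra.single g (y.coeff g) = y := by
  classical
  ext g'
  rw [MonoidAlgebra.coeff_sum, Finset.sum_apply', Finset.sum_eq_single g']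
  · rw [MonoidAlgebra.coeff_single, Finsupp.single_apply, if_pos rfl]
  · intro h _ hne
    rw [MonoidAlgebra.coeff_single, Finsupp.single_apply, if_neg hne]
  · simp

lemma Tc_pow_card [Fact p.Prime] (hp : p.Prime) (c : G → ZMod p)
    (hc : ∀ g h : G, c (g * h) = c (h * g)) (y : MonoidAlgebra (ZMod p) G) :
    Tc p c (y ^ p) = ∑ g : G, c (g ^ p) * y.coeff g := by
  conv_lhs => rw [← sum_univ_single y]
  rw [trace_sum_pow hp (Tc p c) (Tc_mul_comm c hc)]
  refine Finset.sum_congr rfl fun g _ => ?_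
  rw [MonoidAlgebra.single_pow, Tc_single, ZMod.pow_card]

lemma iterate_partial (hp : p.Prime) [Fact p.Prime] (j : ℕ) (c : G → ZMod p)
    (hc : ∀ g h : G, c (g * h) = c (h * g)) (y : MonoidAlgebra (ZMod p) G) :
    ∑ g : G, c g * (y ^ p ^ j).coeff g = ∑ g : G, c (g ^ p ^ j) * y.coeff g := by
  induction j generalizing c with
  | zero => simp
  | succ j ih =>
    have hc' : ∀ g h : G, c ((g * h) ^ p) = c ((h * g) ^ p) := by
      intro g h
      have hsc : SemiconjBy g (h * g) (g * h) := by
        simp [SemiconjBy, mul_assoc]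
      have key : g * (h * g) ^ p = (g * h) ^ p * g := hsc.pow_right p
      have h3 : (g * h) ^ p = ((g * h) ^ p * g) * g⁻¹ := by
        rw [mul_assoc, mul_inv_cancel, mul_one]
      rw [h3, hc, ← key, inv_mul_cancel_left]
    rw [show y ^ p ^ (j + 1) = (y ^ p ^ j) ^ p by rw [← pow_mul, pow_succ],
      show ∑ g : G, c g * ((y ^ p ^ j) ^ p).coeff g = Tc p c ((y ^ p ^ j) ^ p) from rfl,
      Tc_pow_card hp c hc, ih (fun g => c (g ^ p)) hc']
    refine Finset.sum_congr rfl fun g _ => ?_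
    rw [← pow_mul, ← pow_succ]

end GroupRing


section Main
open MonoidAlgebra
variable {G : Type*} [Group G] [Fintype G]

noncomputable def phiZ (p : ℕ) (G : Type*) [Group G] :
    MonoidAlgebra ℤ G →+* MonoidAlgebra (ZMod p) G :=
  MonoidAlgebra.liftNCRingHom
    ((MonoidAlgebra.singleOneRingHom).comp (Int.castRingHom (ZMod p)))
    (MonoidAlgebra.of (ZMod p) G)
    (fun a g => by
      show MonoidAlgebra.single (1 : G) ((a : ZMod p)) * MonoidAlgebra.single g (1 : ZMod p)
        = MonoidAlgebra.single g (1 : ZMod p) * MonoidAlgebra.single (1 : G) ((a : ZMod p))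
      rw [MonoidAlgebra.single_mul_single, MonoidAlgebra.single_mul_single,
        one_mul, mul_one, one_mul, mul_one])

lemma phiZ_single (p : ℕ) (a : G) (b : ℤ) :
    phiZ p G (MonoidAlgebra.single a b) = MonoidAlgebra.single a ((b : ZMod p)) := by
  show MonoidAlgebra.liftNC _ _ _ = _
  rw [MonoidAlgebra.liftNC_single]
  show MonoidAlgebra.single (1 : G) ((b : ZMod p)) * MonoidAlgebra.single a (1 : ZMod p) = _
  rw [MonoidAlgebra.single_mul_single, one_mul, mul_one]

lemma phiZ_apply (p : ℕ) (x : MonoidAlgebra ℤ G) (g : G) :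
    (phiZ p G x).coeff g = ((x.coeff g : ℤ) : ZMod p) := by
  classical
  have key : (Finsupp.applyAddHom (M := ZMod p) g).comp
        ((MonoidAlgebra.coeffAddEquiv (R := ZMod p) (M := G)).toAddMonoidHom.comp
          (phiZ p G).toAddMonoidHom)
      = (Int.castAddHom (ZMod p)).comp ((Finsupp.applyAddHom (M := ℤ) g).comp
          (MonoidAlgebra.coeffAddEquiv (R := ℤ) (M := G)).toAddMonoidHom) := by
    apply MonoidAlgebra.addMonoidHom_ext
    intro a b
    show (phiZ p G (MonoidAlgebra.single a b)).coeff g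
      = (((MonoidAlgebra.single a b).coeff g : ℤ) : ZMod p)
    rw [phiZ_single, MonoidAlgebra.coeff_single, MonoidAlgebra.coeff_single,
      Finsupp.single_apply, Finsupp.single_apply,
      apply_ite (fun z : ℤ => (z : ZMod p))]
    simp
  exact DFunLike.congr_fun key x

end Main


end FrobeniusTraceAux


open scoped Classical in
/-- The partial augmentation of `u ∈ ℤG` at the conjugacy class of `c`:
the sum of the coefficients of `u` over the conjugacy class of `c`. -/
def partialAug {G : Type*} [Group G] [Fintype G] (u : MonoidAlgebra ℤ G) (c : G) : ℤ :=
  ∑ g : G, if IsConj c g then u.coeff g else 0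

open scoped Classical in
/-- For a torsion unit `u ∈ V(ℤG)`, a prime `p`, `j ≥ 0` and a conjugacy class `D` (with
representative `d`), one has `∑_{C : C^{p^j} ⊆ D} ε_C(u) ≡ ε_D(u^{p^j}) (mod p)`. The
left-hand side, the sum of `ε_C(u)` over all conjugacy classes `C` whose `p^j`-th powers
lie in `D`, equals the sum of the coefficients of `u` over all `g` with `g^{p^j} ∈ D`. -/
theorem partialAug_pow_congr {G : Type*} [Group G] [Fintype G]
    (u : (MonoidAlgebra ℤ G)ˣ) (haug : aug (u : MonoidAlgebra ℤ G) = 1)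
    (hu : IsOfFinOrder u) (p : ℕ) (hp : p.Prime) (j : ℕ) (d : G) :
    (∑ g : G, if IsConj d (g ^ p ^ j) then (u : MonoidAlgebra ℤ G).coeff g else 0)
      ≡ partialAug ((u ^ p ^ j : (MonoidAlgebra ℤ G)ˣ) : MonoidAlgebra ℤ G) d
        [ZMOD (p : ℤ)] := by
  haveI : Fact p.Prime := ⟨hp⟩
  rw [← ZMod.intCast_eq_intCast_iff]
  set y : MonoidAlgebra (ZMod p) G := phiZ p G (u : MonoidAlgebra ℤ G) with hy
  set c : G → ZMod p := fun g => if IsConj d g then (1 : ZMod p) else 0 with hc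
  have hcc : ∀ g h : G, c (g * h) = c (h * g) := by
    intro g h
    have hconj : IsConj d (g * h) ↔ IsConj d (h * g) := by
      have hgh : IsConj (g * h) (h * g) := isConj_iff.mpr ⟨h, by group⟩
      exact ⟨fun hd => hd.trans hgh, fun hd => hd.trans hgh.symm⟩
    simp only [hc]
    exact if_congr hconj rfl rfl
  have key := iterate_partial hp j c hcc y
  have hL : ((∑ g : G, if IsConj d (g ^ p ^ j) then (u : MonoidAlgebra ℤ G).coeff g else 0 : ℤ) : ZMod p)
      = ∑ g : G, c (g ^ p ^ j) * y.coeff g := by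
    push_cast
    refine Finset.sum_congr rfl fun g _ => ?_
    simp only [hc]
    split_ifs with h
    · rw [one_mul, hy]
      exact (phiZ_apply p _ g).symm
    · simp
  have hR : ((partialAug ((u ^ p ^ j : (MonoidAlgebra ℤ G)ˣ) : MonoidAlgebra ℤ G) d : ℤ) : ZMod p)
      = ∑ g : G, c g * (y ^ p ^ j).coeff g := by
    simp only [partialAug]
    push_cast
    refine Finset.sum_congr rfl fun g _ => ?_
    have hpow : ((u ^ p ^ j : (MonoidAlgebra ℤ G)ˣ) : MonoidAlgebra ℤ G)
        = ((u : MonoidAlgebra ℤ G)) ^ p ^ j := Units.val_pow_eq_pow_val u (p ^ j)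
    have hyg : (y ^ p ^ j).coeff g = ((((u : MonoidAlgebra ℤ G) ^ p ^ j).coeff g : ℤ) : ZMod p) := by
      rw [hy, ← map_pow, phiZ_apply]
    simp only [hc, hpow, hyg]
    split_ifs with h
    · rw [one_mul]
    · simp
  rw [hL, hR, ← key]
end
end
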